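/- arXiv:1807.09452 — 6 statements merged into one kernel-verified Lean document; each statement's English description precedes it below -/
import Mathlib

section
/- Let L be a non-degenerate even lattice of rank n and p an odd prime such that the Sylow p-subgroup of G(L) = L*/L is isomorphic to 𝔽_p^n. Then the rescaled form L(1/p), i.e. the same ℤ-module L with bilinear form (x,y)_{L(1/p)} = (1/p)(x,y)_L, is a well-defined non-degenerate even lattice (in particular (1/p)(x,y) ∈ ℤ for all x,y ∈ L and (1/p)(x,x) ∈ 2ℤ for all x ∈ L). -/
/-!
Multiplication by `p` sends the `p`-torsion `A` of `L*/L` into `L/pL`, injectively because `V` is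
torsion-free. Both groups have `p^n` elements, so the map is onto, i.e. `L ⊆ p L*`; hence `B` takes
values in `pℤ` on `L`, and as `p` is odd, `B(x,x)/p` is even together with `B(x,x)`.
-/

/-- The dual lattice `L* = {x ∈ L ⊗ ℚ : (x,y) ∈ ℤ for all y ∈ L}` of a lattice `L`
inside a rational quadratic space `(V, B)`. -/
def dualLattice {V : Type*} [AddCommGroup V] [Module ℚ V]
    (B : V →ₗ[ℚ] V →ₗ[ℚ] ℚ) (L : Submodule ℤ V) : Submodule ℤ V where
  carrier := {x : V | ∀ y ∈ L, ∃ n : ℤ, B x y = n}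
  add_mem' := by
    intro a b ha hb y hy
    obtain ⟨m, hm⟩ := ha y hy
    obtain ⟨n, hn⟩ := hb y hy
    exact ⟨m + n, by simp [hm, hn]⟩
  zero_mem' := fun y hy => ⟨0, by simp⟩
  smul_mem' := by
    intro c x hx y hy
    obtain ⟨m, hm⟩ := hx y hy
    refine ⟨c * m, ?_⟩
    rw [map_zsmul, LinearMap.smul_apply, hm, zsmul_eq_mul]
    push_cast
    ring

/-- The `p`-primary part (Sylow `p`-subgroup) of a submodule `N` of a `ℤ`-module `M`. -/
def pPrimary {M : Type*} [AddCommGroup M] (p : ℕ) (N : Submodule ℤ M) : Submodule ℤ M where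
  carrier := {x : M | x ∈ N ∧ ∃ k : ℕ, ((p : ℤ) ^ k) • x = 0}
  add_mem' := by
    rintro a b ⟨haN, k, hk⟩ ⟨hbN, l, hl⟩
    refine ⟨N.add_mem haN hbN, k + l, ?_⟩
    have h1 : ((p : ℤ) ^ (k + l)) • a = 0 := by
      rw [pow_add, mul_comm, mul_smul, hk, smul_zero]
    have h2 : ((p : ℤ) ^ (k + l)) • b = 0 := by
      rw [pow_add, mul_smul, hl, smul_zero]
    rw [smul_add, h1, h2, add_zero]
  zero_mem' := ⟨N.zero_mem, 0, smul_zero _⟩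
  smul_mem' := by
    rintro c x ⟨hxN, k, hk⟩
    exact ⟨N.smul_mem c hxN, k, by rw [smul_comm, hk, smul_zero]⟩

open Function LinearMap

theorem LinearMap.surjective_of_ker_eq_ker {R M P Q : Type*} [Ring R] [AddCommGroup M]
    [AddCommGroup P] [AddCommGroup Q] [Module R M] [Module R P] [Module R Q] [Finite P]
    {f : M →ₗ[R] P} {g : M →ₗ[R] Q} (hg : Surjective g) (hker : ker f = ker g)
    (hcard : Nat.card Q = Nat.card P) : Surjective f := by
  have hbij : Bijective ((ker f).liftQ f le_rfl) := by
    refine (Nat.bijective_iff_injective_and_card _).mpr ⟨?_, ?_⟩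
    · rw [← ker_eq_bot]
      exact Submodule.ker_liftQ_eq_bot _ _ _ le_rfl
    · rw [← hcard]
      exact Nat.card_congr ((Submodule.quotEquivOfEq _ _ hker).trans
        (g.quotKerEquivOfSurjective hg)).toEquiv
  intro y
  obtain ⟨q, rfl⟩ := hbij.surjective y
  obtain ⟨x, rfl⟩ := (ker f).mkQ_surjective q
  exact ⟨x, rfl⟩

noncomputable def Module.Basis.coordMod {ι M : Type*} [AddCommGroup M]
    (b : Module.Basis ι ℤ M) (p : ℕ) : M →ₗ[ℤ] ι → ZMod p :=
  LinearMap.pi fun i => (Int.castAddHom (ZMod p)).toIntLinearMap ∘ₗ b.coord i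

theorem Module.Basis.coordMod_eq_zero_iff {ι M : Type*} [AddCommGroup M]
    (b : Module.Basis ι ℤ M) (p : ℕ) (y : M) :
    b.coordMod p y = 0 ↔ ∃ z, y = (p : ℤ) • z := by
  constructor
  · intro h
    have hdvd (i : ι) : (p : ℤ) ∣ b.repr y i :=
      (ZMod.intCast_zmod_eq_zero_iff_dvd _ p).mp (congrFun h i)
    refine ⟨b.repr.symm ((b.repr y).mapRange (· / (p : ℤ)) (Int.zero_ediv _)),
      b.repr.injective ?_⟩
    ext i
    simp [Int.mul_ediv_cancel' (hdvd i)]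
  · rintro ⟨z, rfl⟩
    ext i
    simp [coordMod]

theorem smul_eq_zero_of_mem_pPrimary {ι M : Type*} [AddCommGroup M] {p : ℕ} {N : Submodule ℤ M}
    (e : pPrimary p N ≃+ (ι → ZMod p)) {a : M} (ha : a ∈ pPrimary p N) : (p : ℤ) • a = 0 := by
  have : (p : ℤ) • (⟨a, ha⟩ : pPrimary p N) = 0 :=
    e.injective (by rw [map_zsmul, map_zero]; ext; simp)
  simpa using congrArg Subtype.val this

theorem exists_mem_smul_eq_of_pPrimary_addEquiv {V ι : Type*} [AddCommGroup V]
    [IsAddTorsionFree V] [Finite ι] {M L : Submodule ℤ V} (hLM : L ≤ M)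
    (b : Module.Basis ι ℤ L) {p : ℕ} [NeZero p] (e : pPrimary p (M.map L.mkQ) ≃+ (ι → ZMod p))
    {y : V} (hy : y ∈ L) : ∃ x ∈ M, y = (p : ℤ) • x := by
  set A := pPrimary p (M.map L.mkQ)
  set N := A.comap L.mkQ
  have hpN (x : N) : (p : ℤ) • (x : V) ∈ L := by
    rw [← Submodule.Quotient.mk_eq_zero, Submodule.Quotient.mk_smul]
    exact smul_eq_zero_of_mem_pPrimary e x.2
  have hNM : N ≤ M := by
    rintro x ⟨⟨x', hx', hxx'⟩, -⟩
    have : x - x' ∈ L := by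
      rw [← Submodule.Quotient.eq]
      exact hxx'.symm
    simpa using M.add_mem (hLM this) hx'
  -- `ψ x` is `p • x ∈ L` read in `L / pL ≃ ι → ZMod p`
  let ψ : N →ₗ[ℤ] ι → ZMod p :=
    b.coordMod p ∘ₗ ((p : ℤ) • N.subtype).codRestrict L hpN
  let π : N →ₗ[ℤ] A := (L.mkQ ∘ₗ N.subtype).codRestrict A fun x => x.2
  have hπ : Function.Surjective π := by
    rintro ⟨a, ha⟩
    obtain ⟨x, rfl⟩ := L.mkQ_surjective a
    exact ⟨⟨x, ha⟩, rfl⟩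
  have hker : ker ψ = ker π := by
    ext x
    change b.coordMod p ⟨(p : ℤ) • (x : V), hpN x⟩ = 0 ↔ (⟨L.mkQ x, x.2⟩ : A) = 0
    rw [b.coordMod_eq_zero_iff, Submodule.mk_eq_zero, Submodule.mkQ_apply,
      Submodule.Quotient.mk_eq_zero]
    constructor
    · rintro ⟨z, hz⟩
      have hxz : (x : V) = z :=
        zsmul_right_injective (by exact_mod_cast NeZero.ne p) (congrArg Subtype.val hz)
      exact hxz ▸ z.2
    · intro hx
      exact ⟨⟨x, hx⟩, rfl⟩
  have hψ : Function.Surjective ψ := surjective_of_ker_eq_ker hπ hker (Nat.card_congr e.toEquiv)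
  obtain ⟨x, hx⟩ := hψ (b.coordMod p ⟨y, hy⟩)
  obtain ⟨z, hz⟩ := (b.coordMod_eq_zero_iff p (⟨y, hy⟩ - ⟨(p : ℤ) • (x : V), hpN x⟩)).mp
    (by rw [map_sub, ← hx, sub_eq_zero]; rfl)
  refine ⟨x + z, M.add_mem (hNM x.2) (hLM z.2), ?_⟩
  rw [smul_add, ← sub_eq_iff_eq_add']
  exact congrArg Subtype.val hz

theorem stmt1_general {V : Type*} [AddCommGroup V] [Module ℚ V]
    (B : V →ₗ[ℚ] V →ₗ[ℚ] ℚ) (L : Submodule ℤ V) (n : ℕ)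
    (basis : Module.Basis (Fin n) ℤ L)
    (hint : ∀ x ∈ L, ∀ y ∈ L, ∃ m : ℤ, B x y = m)
    (heven : ∀ x ∈ L, ∃ m : ℤ, B x x = 2 * m)
    (hnd : ∀ x : V, (∀ y : V, B x y = 0) → x = 0)
    (p : ℕ) (hp : p.Prime) (hodd : p ≠ 2)
    (hSyl : Nonempty
      ((pPrimary p (Submodule.map L.mkQ (dualLattice B L))) ≃+ (Fin n → ZMod p))) :
    (∀ x ∈ L, ∀ y ∈ L, ∃ m : ℤ, (p : ℚ)⁻¹ * B x y = m) ∧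
    (∀ x ∈ L, ∃ m : ℤ, (p : ℚ)⁻¹ * B x x = 2 * m) ∧
    (∀ x : V, (∀ y : V, (p : ℚ)⁻¹ * B x y = 0) → x = 0) := by
  have := IsAddTorsionFree.of_module_rat V
  have : NeZero p := ⟨hp.ne_zero⟩
  have hp0 : (p : ℚ) ≠ 0 := by exact_mod_cast hp.ne_zero
  obtain ⟨e⟩ := hSyl
  have hLD : L ≤ dualLattice B L := fun x hx y hy => hint x hx y hy
  have hdiv : ∀ x ∈ L, ∀ y ∈ L, ∃ m : ℤ, (p : ℚ)⁻¹ * B x y = m := by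
    intro x hx y hy
    obtain ⟨w, hw, rfl⟩ := exists_mem_smul_eq_of_pPrimary_addEquiv hLD basis e hx
    obtain ⟨m, hm⟩ := hw y hy
    refine ⟨m, ?_⟩
    rw [← Int.cast_smul_eq_zsmul ℚ, map_smul, LinearMap.smul_apply, hm, smul_eq_mul]
    push_cast
    exact inv_mul_cancel_left₀ hp0 _
  refine ⟨hdiv, fun x hx => ?_, fun x hx => hnd x fun y => ?_⟩
  · obtain ⟨m, hm⟩ := hdiv x hx x hx
    obtain ⟨k, hk⟩ := heven x hx
    have hpm : (p : ℤ) * m = 2 * k := by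
      exact_mod_cast (show (p : ℚ) * m = 2 * k by rw [← hm, ← hk, mul_inv_cancel_left₀ hp0])
    have hp_odd : ¬Even (p : ℤ) :=
      Int.not_even_iff_odd.mpr (by exact_mod_cast hp.odd_of_ne_two hodd)
    obtain ⟨l, rfl⟩ : Even m :=
      (Int.even_mul.mp (hpm ▸ even_two_mul k)).resolve_left hp_odd
    exact ⟨l, by rw [hm]; push_cast; ring⟩
  · simpa [hp.ne_zero] using hx y

/-- Let `L` be a non-degenerate even lattice of rank `n` in a rational
quadratic space `(V, B)` and `p` an odd prime such that the Sylow `p`-subgroup of the glue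
group `G(L) = L*/L` is isomorphic to `𝔽_p^n`.  Then the rescaled form `L(1/p)`, with bilinear
form `(x,y) ↦ (1/p)·B x y`, is a well-defined non-degenerate even lattice: it is `ℤ`-valued
and even on `L`, and non-degenerate. -/
theorem stmt1 {V : Type*} [AddCommGroup V] [Module ℚ V]
    (B : V →ₗ[ℚ] V →ₗ[ℚ] ℚ) (L : Submodule ℤ V) (n : ℕ)
    (basis : Module.Basis (Fin n) ℤ L)
    (hfull : Submodule.span ℚ (L : Set V) = ⊤)
    (hsymm : ∀ x y : V, B x y = B y x)
    (hint : ∀ x ∈ L, ∀ y ∈ L, ∃ m : ℤ, B x y = m)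
    (heven : ∀ x ∈ L, ∃ m : ℤ, B x x = 2 * m)
    (hnd : ∀ x : V, (∀ y : V, B x y = 0) → x = 0)
    (p : ℕ) (hp : p.Prime) (hodd : p ≠ 2)
    (hSyl : Nonempty
      ((pPrimary p (Submodule.map L.mkQ (dualLattice B L))) ≃+ (Fin n → ZMod p))) :
    (∀ x ∈ L, ∀ y ∈ L, ∃ m : ℤ, (p : ℚ)⁻¹ * B x y = m) ∧
    (∀ x ∈ L, ∃ m : ℤ, (p : ℚ)⁻¹ * B x x = 2 * m) ∧
    (∀ x : V, (∀ y : V, (p : ℚ)⁻¹ * B x y = 0) → x = 0) :=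
  stmt1_general B L n basis hint heven hnd p hp hodd hSyl
end

section
/- Let L be a non-degenerate even lattice of rank n such that the Sylow 2-subgroup of G(L) = L*/L is isomorphic to 𝔽_2^n and such that the induced bilinear form b_L on G(L) satisfies b_L(x,x) = 0 in ℚ/ℤ for all x in the Sylow 2-subgroup. Then L(1/2) (the module L with form halved) is a well-defined non-degenerate even lattice. -/
/-! Halving `x ↦ x/2 mod L` is a homomorphism `L → (L ⊗ ℚ)/L` killed by `2`, so its image has at
most `2^n` elements. The `2`-primary part of `L*/L` is killed by `2` as well, hence lies in that
image, and it has exactly `2^n` elements; so the two coincide and `½L ⊆ L*`. This is integrality of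
`B/2` on `L`, and the hypothesis `b_L(x/2, x/2) = 0` turns it into evenness. -/

theorem zsmul_eq_emod_zsmul {N : Type*} [AddCommGroup N] {p : ℤ} {y : N} (hy : p • y = 0)
    (z : ℤ) : z • y = (z % p) • y := by
  conv_lhs => rw [← Int.emod_add_mul_ediv z p]
  rw [add_zsmul, mul_comm, mul_zsmul, hy, zsmul_zero, add_zero]

theorem Module.Basis.range_subset_range_zmod {ι M N : Type*} [Fintype ι] [AddCommGroup M]
    [AddCommGroup N] (b : Module.Basis ι ℤ M) (f : M →+ N) (p : ℕ) [NeZero p]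
    (hf : ∀ x, (p : ℤ) • f x = 0) :
    Set.range f ⊆ Set.range fun v : ι → ZMod p => ∑ i, ((v i).val : ℤ) • f (b i) := by
  rintro _ ⟨x, rfl⟩
  refine ⟨fun i => (b.repr x i : ZMod p), ?_⟩
  conv_rhs => rw [← b.sum_repr x, map_sum]
  refine Finset.sum_congr rfl fun i _ => ?_
  rw [ZMod.val_intCast, map_zsmul, ← zsmul_eq_emod_zsmul (hf (b i))]

theorem Module.Basis.range_subset_of_card_le {ι M N : Type*} [Fintype ι] [AddCommGroup M]
    [AddCommGroup N] (b : Module.Basis ι ℤ M) (f : M →+ N) (p : ℕ) [NeZero p]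
    (hf : ∀ x, (p : ℤ) • f x = 0) {S : Set N} (hS : S ⊆ Set.range f)
    (hcard : p ^ Fintype.card ι ≤ Nat.card S) : Set.range f ⊆ S := by
  have hsub := b.range_subset_range_zmod f p hf
  refine (Set.eq_of_subset_of_ncard_le hS ?_ ((Set.finite_range _).subset hsub)).symm.subset
  calc (Set.range f).ncard
      ≤ (Set.range fun v : ι → ZMod p => ∑ i, ((v i).val : ℤ) • f (b i)).ncard :=
        Set.ncard_le_ncard hsub (Set.finite_range _)
    _ ≤ Nat.card (ι → ZMod p) := by rw [← Nat.card_coe_set_eq]; exact Finite.card_range_le _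
    _ = p ^ Fintype.card ι := by simp [Nat.card_fun]
    _ ≤ S.ncard := by rwa [← Nat.card_coe_set_eq]

theorem AddEquiv.zsmul_eq_zero_of_zmod {ι A : Type*} [AddCommGroup A] {p : ℕ}
    (e : A ≃+ (ι → ZMod p)) (a : A) : (p : ℤ) • a = 0 := by
  apply e.injective
  ext i
  simp

theorem two_zsmul_inv_two_smul {V : Type*} [AddCommGroup V] [Module ℚ V] (x : V) :
    (2 : ℤ) • (2 : ℚ)⁻¹ • x = x := by
  rw [two_zsmul, ← add_smul]
  norm_num

theorem inv_two_smul_two_zsmul {V : Type*} [AddCommGroup V] [Module ℚ V] (x : V) :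
    (2 : ℚ)⁻¹ • (2 : ℤ) • x = x := by
  rw [two_zsmul, smul_add, ← add_smul]
  norm_num

theorem inv_two_smul_mem_dualLattice {V : Type*} [AddCommGroup V] [Module ℚ V]
    {B : V →ₗ[ℚ] V →ₗ[ℚ] ℚ} {L : Submodule ℤ V} {n : ℕ} (b : Module.Basis (Fin n) ℤ L)
    (hL : L ≤ dualLattice B L)
    (hSyl : Nonempty ((pPrimary 2 ((dualLattice B L).map L.mkQ)) ≃+ (Fin n → ZMod 2)))
    {x : V} (hx : x ∈ L) : (2 : ℚ)⁻¹ • x ∈ dualLattice B L := by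
  obtain ⟨e⟩ := hSyl
  let halve : L →+ V ⧸ L :=
    AddMonoidHom.mk' (fun y => L.mkQ ((2 : ℚ)⁻¹ • (y : V))) fun y z => by simp [smul_add]
  have halve_two_torsion : ∀ y, ((2 : ℕ) : ℤ) • halve y = 0 := fun y => by
    change (2 : ℤ) • L.mkQ _ = 0
    rw [← map_zsmul, two_zsmul_inv_two_smul, Submodule.mkQ_apply, Submodule.Quotient.mk_eq_zero]
    exact y.2
  have primary_subset : (pPrimary 2 ((dualLattice B L).map L.mkQ) : Set (V ⧸ L)) ⊆
      Set.range halve := by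
    rintro _ hq
    obtain ⟨⟨z, -, rfl⟩, -⟩ := id hq
    have h2z : (2 : ℤ) • z ∈ L := by
      have h := congrArg Subtype.val (e.zsmul_eq_zero_of_zmod ⟨_, hq⟩)
      rwa [Submodule.coe_smul, ← map_zsmul, Submodule.mkQ_apply, ZeroMemClass.coe_zero,
        Submodule.Quotient.mk_eq_zero] at h
    exact ⟨⟨_, h2z⟩, congrArg L.mkQ (inv_two_smul_two_zsmul z)⟩
  have card_primary : 2 ^ Fintype.card (Fin n) ≤
      Nat.card (pPrimary 2 ((dualLattice B L).map L.mkQ) : Set (V ⧸ L)) := by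
    simp [Nat.card_congr e.toEquiv]
  obtain ⟨⟨y, hy, hyx⟩, -⟩ :=
    b.range_subset_of_card_le halve 2 halve_two_torsion primary_subset card_primary ⟨⟨x, hx⟩, rfl⟩
  have hdiff : y - (2 : ℚ)⁻¹ • x ∈ L := (Submodule.Quotient.eq L).mp hyx
  simpa using sub_mem hy (hL hdiff)

theorem stmt2_general {V : Type*} [AddCommGroup V] [Module ℚ V]
    (B : V →ₗ[ℚ] V →ₗ[ℚ] ℚ) (L : Submodule ℤ V) (n : ℕ)
    (basis : Module.Basis (Fin n) ℤ L)
    (hint : ∀ x ∈ L, ∀ y ∈ L, ∃ m : ℤ, B x y = m)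
    (hnd : ∀ x : V, (∀ y : V, B x y = 0) → x = 0)
    (hSyl : Nonempty
      ((pPrimary 2 (Submodule.map L.mkQ (dualLattice B L))) ≃+ (Fin n → ZMod 2)))
    (hbzero : ∀ x ∈ dualLattice B L, (2 : ℤ) • x ∈ L → ∃ m : ℤ, B x x = m) :
    (∀ x ∈ L, ∀ y ∈ L, ∃ m : ℤ, (2 : ℚ)⁻¹ * B x y = m) ∧
    (∀ x ∈ L, ∃ m : ℤ, (2 : ℚ)⁻¹ * B x x = 2 * m) ∧
    (∀ x : V, (∀ y : V, (2 : ℚ)⁻¹ * B x y = 0) → x = 0) := by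
  have half_mem : ∀ x ∈ L, (2 : ℚ)⁻¹ • x ∈ dualLattice B L := fun x hx =>
    inv_two_smul_mem_dualLattice basis hint hSyl hx
  refine ⟨fun x hx y hy => ?_, fun x hx => ?_, fun x hx => hnd x fun y => ?_⟩
  · simpa using half_mem x hx y hy
  · obtain ⟨m, hm⟩ := hbzero _ (half_mem x hx) (by rwa [two_zsmul_inv_two_smul])
    refine ⟨m, ?_⟩
    simp only [map_smul, LinearMap.smul_apply, smul_eq_mul] at hm
    linarith
  · simpa using hx y

/-- Let `L` be a non-degenerate even lattice of rank `n` whose Sylow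
`2`-subgroup of `G(L) = L*/L` is isomorphic to `𝔽_2^n`, and such that the induced bilinear
form `b_L` satisfies `b_L(x,x) = 0` in `ℚ/ℤ` for all `x` in the Sylow `2`-subgroup (i.e.
`B x x ∈ ℤ` for every `x ∈ L*` with `2x ∈ L`).  Then `L(1/2)` is a well-defined
non-degenerate even lattice. -/
theorem stmt2 {V : Type*} [AddCommGroup V] [Module ℚ V]
    (B : V →ₗ[ℚ] V →ₗ[ℚ] ℚ) (L : Submodule ℤ V) (n : ℕ)
    (basis : Module.Basis (Fin n) ℤ L)
    (hfull : Submodule.span ℚ (L : Set V) = ⊤)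
    (hsymm : ∀ x y : V, B x y = B y x)
    (hint : ∀ x ∈ L, ∀ y ∈ L, ∃ m : ℤ, B x y = m)
    (heven : ∀ x ∈ L, ∃ m : ℤ, B x x = 2 * m)
    (hnd : ∀ x : V, (∀ y : V, B x y = 0) → x = 0)
    (hSyl : Nonempty
      ((pPrimary 2 (Submodule.map L.mkQ (dualLattice B L))) ≃+ (Fin n → ZMod 2)))
    (hbzero : ∀ x ∈ dualLattice B L, (2 : ℤ) • x ∈ L → ∃ m : ℤ, B x x = m) :
    (∀ x ∈ L, ∀ y ∈ L, ∃ m : ℤ, (2 : ℚ)⁻¹ * B x y = m) ∧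
    (∀ x ∈ L, ∃ m : ℤ, (2 : ℚ)⁻¹ * B x x = 2 * m) ∧
    (∀ x : V, (∀ y : V, (2 : ℚ)⁻¹ * B x y = 0) → x = 0) :=
  stmt2_general B L n basis hint hnd hSyl hbzero
end

section
/- In the setting of Lemma 'Ordercoprime': let f₁ ∈ O(L₁) be of finite order with characteristic polynomial χ_{f₁}(x) = Φ_{p^m}(x)^k for a prime p and m, k > 0, let f₂ ∈ O(L₂) be of finite order coprime to that of f₁, and suppose f̄_i(H_i) = H_i for subgroups H_i ⊆ G(L_i) glued by φ with φ ∘ f̄₁ = f̄₂ ∘ φ. Then H₁ (and hence H₂) is a p-elementary abelian group, i.e. p·H₁ = 0. -/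
/-! The characteristic polynomial forces `Φ_{p^m}(f₁) = 0` only because `f₁` has finite order:
its minimal polynomial then divides the separable `X^n - 1`. Writing `Φ_{p^m} = ∑_{i<p} X^{p^{m-1} i}`,
the orbit sum of `f₁^{p^{m-1}}` vanishes, and on `H₁`, where `f̄₁` is the identity (its order divides
both `n₁` and, by conjugation with `φ`, `n₂`), this orbit sum is multiplication by `p`. -/

open Polynomial Finset Function

theorem Function.Semiconj.iterate_eq_id_of_surjective {α β : Type*} {f : α → β} {ga : α → α}
    {gb : β → β} (h : Semiconj f ga gb) (hf : Surjective f) {n : ℕ} (hn : ga^[n] = id) :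
    gb^[n] = id := by
  funext y
  obtain ⟨x, rfl⟩ := hf y
  rw [← (h.iterate_right n).eq, hn]; rfl

theorem Function.Semiconj.iterate_eq_id_of_injective {α β : Type*} {f : α → β} {ga : α → α}
    {gb : β → β} (h : Semiconj f ga gb) (hf : Injective f) {n : ℕ} (hn : gb^[n] = id) :
    ga^[n] = id :=
  funext fun x => hf <| by rw [(h.iterate_right n).eq, hn]; rfl

namespace Module.End

theorem pow_eq_one_iff_iterate_eq_id {R M : Type*} [Semiring R] [AddCommMonoid M] [Module R M]
    {f : Module.End R M} {n : ℕ} : f ^ n = 1 ↔ (⇑f)^[n] = id := by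
  rw [← coe_pow, ← coe_one (R := R) (M := M), DFunLike.coe_fn_eq]

theorem squarefree_minpoly_of_pow_eq_one {K V : Type*} [Field K] [AddCommGroup V] [Module K V]
    {f : Module.End K V} {n : ℕ} (hn : (n : K) ≠ 0) (hf : f ^ n = 1) :
    Squarefree (minpoly K f) :=
  (X_pow_sub_one_separable_iff.mpr hn).squarefree.squarefree_of_dvd <|
    minpoly.dvd K f (by simp [hf])

theorem aeval_eq_zero_of_charpoly_eq_pow {K V : Type*} [Field K] [AddCommGroup V] [Module K V]
    [FiniteDimensional K V] {f : Module.End K V} (hf : Squarefree (minpoly K f)) {P : K[X]}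
    {k : ℕ} (hk : k ≠ 0) (h : f.charpoly = P ^ k) : aeval f P = 0 := by
  obtain ⟨c, hc⟩ := (hf.dvd_pow_iff_dvd hk).mp (h ▸ f.minpoly_dvd_charpoly)
  rw [hc, map_mul, minpoly.aeval, zero_mul]

theorem restrict_eq_one_of_semiconj_of_coprime {R M N : Type*} [Semiring R] [AddCommMonoid M]
    [Module R M] {F : Module.End R M} {H : Submodule R M} (hH : ∀ q ∈ H, F q ∈ H) {G : N → N}
    {e : H → N} (he : Function.Injective e) (hsemi : Semiconj e (F.restrict hH) G) {a b : ℕ}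
    (hF : F ^ a = 1) (hG : G^[b] = id) (hab : a.Coprime b) : F.restrict hH = 1 := by
  have ha : (F.restrict hH) ^ a = 1 := by
    ext x
    simp [pow_restrict, hF]
  have hb : (F.restrict hH) ^ b = 1 :=
    pow_eq_one_iff_iterate_eq_id.mpr (hsemi.iterate_eq_id_of_injective he hG)
  simpa [hab.gcd_eq_one] using pow_gcd_eq_one.mpr ⟨ha, hb⟩

end Module.End

open Module.End

theorem sum_range_pow_eq_zero_of_aeval_cyclotomic {R A : Type*} [CommRing R] [Ring A]
    [Algebra R A] {a : A} {p n : ℕ} (hp : p.Prime) (ha : aeval a (cyclotomic (p ^ (n + 1)) R) = 0) :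
    ∑ i ∈ range p, (a ^ p ^ n) ^ i = 0 := by
  simpa [cyclotomic_prime_pow_eq_geom_sum hp] using ha

theorem nsmul_eq_zero_of_sum_range_pow_eq_zero {R S M Q : Type*} [Semiring R] [Semiring S]
    [AddCommMonoid M] [AddCommMonoid Q] [Module R M] [Module S M] [Module S Q]
    {π : M →ₗ[S] Q} {f : Module.End R M} {F : Module.End S Q} (hπ : Semiconj π f F) {n r : ℕ}
    (hsum : ∑ i ∈ range n, (f ^ r) ^ i = 0) {x : M} (hx : F (π x) = π x) : n • π x = 0 :=
  calc n • π x = ∑ i ∈ range n, ((F ^ r) ^ i) (π x) := by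
        simp [← pow_mul, Module.End.pow_apply, iterate_fixed hx]
    _ = π ((∑ i ∈ range n, (f ^ r) ^ i) x) := by
        simp [LinearMap.sum_apply, ← pow_mul, Module.End.pow_apply, (hπ.iterate_right _).eq]
    _ = 0 := by rw [hsum, LinearMap.zero_apply, map_zero]

theorem stmt7_general {V₁ V₂ : Type*} [AddCommGroup V₁] [Module ℚ V₁] [AddCommGroup V₂] [Module ℚ V₂]
    [FiniteDimensional ℚ V₁]
    (L₁ : Submodule ℤ V₁) (L₂ : Submodule ℤ V₂) (n₁ n₂ : ℕ)
    -- the isometries `f₁ ∈ O(L₁)`, `f₂ ∈ O(L₂)`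
    (f₁ : V₁ →ₗ[ℚ] V₁) (f₂ : V₂ →ₗ[ℚ] V₂)
    -- finite orders
    (hn₁ : 0 < n₁)
    (hord₁ : (f₁ : Module.End ℚ V₁) ^ n₁ = 1)
    (hord₂ : (f₂ : Module.End ℚ V₂) ^ n₂ = 1)
    (hcop : Nat.Coprime n₁ n₂)
    (p m k : ℕ) (hp : p.Prime) (hm : 0 < m) (hk : 0 < k)
    (hchar : LinearMap.charpoly f₁ = (Polynomial.cyclotomic (p ^ m) ℚ) ^ k)
    -- the induced maps `f̄ᵢ` on the glue groups (characterized on representatives)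
    (F₁ : (V₁ ⧸ L₁) →ₗ[ℤ] (V₁ ⧸ L₁)) (F₂ : (V₂ ⧸ L₂) →ₗ[ℤ] (V₂ ⧸ L₂))
    (hF₁ : ∀ x : V₁, F₁ (L₁.mkQ x) = L₁.mkQ (f₁ x))
    (hF₂ : ∀ x : V₂, F₂ (L₂.mkQ x) = L₂.mkQ (f₂ x))
    -- the subgroups `Hᵢ ⊆ G(Lᵢ)`, stable under `f̄ᵢ`
    (H₁ : Submodule ℤ (V₁ ⧸ L₁)) (H₂ : Submodule ℤ (V₂ ⧸ L₂))
    (hstab₁ : Submodule.map F₁ H₁ = H₁)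
    -- the gluing map `φ : H₁ → H₂`, reversing the induced `ℚ/ℤ`-valued forms
    (φ : H₁ ≃ₗ[ℤ] H₂)
    -- `φ ∘ f̄₁ = f̄₂ ∘ φ`
    (hcomm : ∀ (q : V₁ ⧸ L₁) (hq : q ∈ H₁) (hfq : F₁ q ∈ H₁),
      ((φ ⟨F₁ q, hfq⟩ : H₂) : V₂ ⧸ L₂) = F₂ ((φ ⟨q, hq⟩ : H₂) : V₂ ⧸ L₂)) :
    (∀ q ∈ H₁, (p : ℤ) • q = 0) ∧ (∀ q ∈ H₂, (p : ℤ) • q = 0) := by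
  obtain ⟨r, rfl⟩ := Nat.exists_eq_add_one.mpr hm
  have hΦ : aeval f₁ (cyclotomic (p ^ (r + 1)) ℚ) = 0 :=
    aeval_eq_zero_of_charpoly_eq_pow
      (squarefree_minpoly_of_pow_eq_one (by exact_mod_cast hn₁.ne') hord₁) hk.ne' hchar
  have hπ₁ : Semiconj L₁.mkQ f₁ F₁ := fun x => (hF₁ x).symm
  have hπ₂ : Semiconj L₂.mkQ f₂ F₂ := fun x => (hF₂ x).symm
  have hmaps : ∀ q ∈ H₁, F₁ q ∈ H₁ := fun q hq => hstab₁ ▸ Submodule.mem_map_of_mem hq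
  have hfix : F₁.restrict hmaps = 1 :=
    restrict_eq_one_of_semiconj_of_coprime hmaps
      (e := fun a => (φ a : V₂ ⧸ L₂)) (Subtype.val_injective.comp φ.injective)
      (fun a => hcomm a a.2 (hmaps a a.2))
      (pow_eq_one_iff_iterate_eq_id.mpr <| hπ₁.iterate_eq_id_of_surjective L₁.mkQ_surjective
        (pow_eq_one_iff_iterate_eq_id.mp hord₁))
      (hπ₂.iterate_eq_id_of_surjective L₂.mkQ_surjective (pow_eq_one_iff_iterate_eq_id.mp hord₂))
      hcop
  have hH₁ : ∀ q ∈ H₁, (p : ℤ) • q = 0 := by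
    intro q hq
    obtain ⟨x, rfl⟩ := L₁.mkQ_surjective q
    have hx : F₁ (L₁.mkQ x) = L₁.mkQ x := congrArg Subtype.val (LinearMap.congr_fun hfix ⟨_, hq⟩)
    simpa using nsmul_eq_zero_of_sum_range_pow_eq_zero hπ₁
      (sum_range_pow_eq_zero_of_aeval_cyclotomic hp hΦ) hx
  refine ⟨hH₁, fun y hy => ?_⟩
  have h₀ : (p : ℤ) • φ.symm ⟨y, hy⟩ = 0 := Subtype.ext (hH₁ _ (φ.symm ⟨y, hy⟩).2)
  simpa using congrArg Subtype.val (congrArg φ h₀)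

/-- In the setting of the previous lemma, suppose moreover that the
characteristic polynomial of `f₁` is `Φ_{p^m}(x)^k` for a prime `p` and `m, k > 0`.  Then
`H₁` (and hence `H₂`) is a `p`-elementary abelian group, i.e. `p·H₁ = 0`. -/
theorem stmt7 {V₁ V₂ : Type*} [AddCommGroup V₁] [Module ℚ V₁] [AddCommGroup V₂] [Module ℚ V₂]
    [FiniteDimensional ℚ V₁] (B₁ : V₁ →ₗ[ℚ] V₁ →ₗ[ℚ] ℚ) (B₂ : V₂ →ₗ[ℚ] V₂ →ₗ[ℚ] ℚ)
    (L₁ : Submodule ℤ V₁) (L₂ : Submodule ℤ V₂) (n₁ n₂ : ℕ)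
    (hfull₁ : Submodule.span ℚ (L₁ : Set V₁) = ⊤)
    (hfull₂ : Submodule.span ℚ (L₂ : Set V₂) = ⊤)
    (hsymm₁ : ∀ x y : V₁, B₁ x y = B₁ y x) (hsymm₂ : ∀ x y : V₂, B₂ x y = B₂ y x)
    (hint₁ : ∀ x ∈ L₁, ∀ y ∈ L₁, ∃ m : ℤ, B₁ x y = m)
    (hint₂ : ∀ x ∈ L₂, ∀ y ∈ L₂, ∃ m : ℤ, B₂ x y = m)
    (hnd₁ : ∀ x : V₁, (∀ y : V₁, B₁ x y = 0) → x = 0)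
    (hnd₂ : ∀ x : V₂, (∀ y : V₂, B₂ x y = 0) → x = 0)
    -- the isometries `f₁ ∈ O(L₁)`, `f₂ ∈ O(L₂)`
    (f₁ : V₁ →ₗ[ℚ] V₁) (f₂ : V₂ →ₗ[ℚ] V₂)
    (hiso₁ : ∀ x y : V₁, B₁ (f₁ x) (f₁ y) = B₁ x y)
    (hiso₂ : ∀ x y : V₂, B₂ (f₂ x) (f₂ y) = B₂ x y)
    (hfL₁ : ∀ x ∈ L₁, f₁ x ∈ L₁) (hfL₂ : ∀ x ∈ L₂, f₂ x ∈ L₂)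
    -- finite orders
    (hn₁ : 0 < n₁) (hn₂ : 0 < n₂)
    (hord₁ : (f₁ : Module.End ℚ V₁) ^ n₁ = 1)
    (hord₂ : (f₂ : Module.End ℚ V₂) ^ n₂ = 1)
    (hcop : Nat.Coprime n₁ n₂)
    (p m k : ℕ) (hp : p.Prime) (hm : 0 < m) (hk : 0 < k)
    (hchar : LinearMap.charpoly f₁ = (Polynomial.cyclotomic (p ^ m) ℚ) ^ k)
    -- the induced maps `f̄ᵢ` on the glue groups (characterized on representatives)
    (F₁ : (V₁ ⧸ L₁) →ₗ[ℤ] (V₁ ⧸ L₁)) (F₂ : (V₂ ⧸ L₂) →ₗ[ℤ] (V₂ ⧸ L₂))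
    (hF₁ : ∀ x : V₁, F₁ (L₁.mkQ x) = L₁.mkQ (f₁ x))
    (hF₂ : ∀ x : V₂, F₂ (L₂.mkQ x) = L₂.mkQ (f₂ x))
    -- the subgroups `Hᵢ ⊆ G(Lᵢ)`, stable under `f̄ᵢ`
    (H₁ : Submodule ℤ (V₁ ⧸ L₁)) (H₂ : Submodule ℤ (V₂ ⧸ L₂))
    (hH₁ : H₁ ≤ Submodule.map L₁.mkQ (dualLattice B₁ L₁))
    (hH₂ : H₂ ≤ Submodule.map L₂.mkQ (dualLattice B₂ L₂))
    (hstab₁ : Submodule.map F₁ H₁ = H₁) (hstab₂ : Submodule.map F₂ H₂ = H₂)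
    -- the gluing map `φ : H₁ → H₂`, reversing the induced `ℚ/ℤ`-valued forms
    (φ : H₁ ≃ₗ[ℤ] H₂)
    (hglue : ∀ x y : V₁, ∀ x' y' : V₂,
      x ∈ dualLattice B₁ L₁ → y ∈ dualLattice B₁ L₁ →
      x' ∈ dualLattice B₂ L₂ → y' ∈ dualLattice B₂ L₂ →
      ∀ (hx : L₁.mkQ x ∈ H₁) (hy : L₁.mkQ y ∈ H₁),
        ((φ ⟨L₁.mkQ x, hx⟩ : H₂) : V₂ ⧸ L₂) = L₂.mkQ x' →
        ((φ ⟨L₁.mkQ y, hy⟩ : H₂) : V₂ ⧸ L₂) = L₂.mkQ y' →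
        ∃ n : ℤ, B₁ x y + B₂ x' y' = n)
    -- `φ ∘ f̄₁ = f̄₂ ∘ φ`
    (hcomm : ∀ (q : V₁ ⧸ L₁) (hq : q ∈ H₁) (hfq : F₁ q ∈ H₁),
      ((φ ⟨F₁ q, hfq⟩ : H₂) : V₂ ⧸ L₂) = F₂ ((φ ⟨q, hq⟩ : H₂) : V₂ ⧸ L₂)) :
    (∀ q ∈ H₁, (p : ℤ) • q = 0) ∧ (∀ q ∈ H₂, (p : ℤ) • q = 0) :=
  stmt7_general L₁ L₂ n₁ n₂ f₁ f₂ hn₁ hord₁ hord₂ hcop p m k hp hm hk hchar F₁ F₂ hF₁ hF₂ H₁ H₂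
    hstab₁ φ hcomm
end

section
/- Let L be a hyperbolic lattice of signature (1,n), let f ∈ O⁺(L), and let h ∈ L with (h,h) > 0. If r ∈ L satisfies r² = −2, (r,h)·(r,f(h)) < 0, then setting x = (h,h), y = (h,f(h)), a = (h,r), b = (f(h),r), the inequality −2x² + 2y² + 2aby ≥ x(a² + b²) holds; in particular, since x > 0, y > 0 and ab < 0, the integers a and b are bounded, so the set of pairs ((r,h),(r,f(h))) as r ranges over such roots is finite. -/
/-!
Since `(h,h) > 0` and the form has only one positive direction, the orthogonal complement of `h`
is negative semidefinite, so the Cauchy–Schwarz inequality holds there with the sign of a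
negative form. Applied to the projections `x f(h) - y h` and `x r - a h` of `f(h)` and `r` to
`h^⊥` it says that the Gram determinant of `(h, f(h), r)` is nonnegative, which expands to the
inequality. As `y > 0` and `ab < 0`, it gives `x a², x b² ≤ 2y²`, bounding the integers `a, b`.
-/

theorem apply_self_eq_sum_repr_sq {R M ι : Type*} [CommSemiring R] [AddCommMonoid M]
    [Module R M] [Fintype ι] {B : M →ₗ[R] M →ₗ[R] R} (e : Module.Basis ι R M)
    (horth : ∀ i j, i ≠ j → B (e i) (e j) = 0) (w : M) :
    B w w = ∑ i, e.repr w i ^ 2 * B (e i) (e i) := by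
  conv_lhs => rw [← e.sum_repr w]
  simp only [map_sum, map_smul, LinearMap.sum_apply, LinearMap.smul_apply, smul_eq_mul]
  refine Finset.sum_congr rfl fun i _ => ?_
  rw [Finset.sum_eq_single i (fun j _ hj => by simp [horth j i hj]) (by simp)]
  ring

section OrderedField

variable {K V ι : Type*} [Field K] [LinearOrder K] [IsStrictOrderedRing K]
  [AddCommGroup V] [Module K V] {B : V →ₗ[K] V →ₗ[K] K}

theorem apply_self_nonpos_of_repr_eq_zero [Fintype ι] (e : Module.Basis ι K V)
    (horth : ∀ i j, i ≠ j → B (e i) (e j) = 0) {i₀ : ι}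
    (hneg : ∀ i, i ≠ i₀ → B (e i) (e i) ≤ 0) {w : V} (hw : e.repr w i₀ = 0) :
    B w w ≤ 0 := by
  rw [apply_self_eq_sum_repr_sq e horth]
  refine Finset.sum_nonpos fun i _ => ?_
  rcases eq_or_ne i i₀ with rfl | hi
  · simp [hw]
  · exact mul_nonpos_of_nonneg_of_nonpos (sq_nonneg _) (hneg i hi)

/-- The vector `e.repr v i₀ • h - e.repr h i₀ • v` of the plane spanned by `h` and `v` lies in
the nonpositive hyperplane `e.repr · i₀ = 0`, whereas `B` is positive definite on that plane
when `B h v = 0` and `B v v > 0`. -/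
theorem apply_self_nonpos_of_apply_eq_zero [Fintype ι] (e : Module.Basis ι K V)
    (horth : ∀ i j, i ≠ j → B (e i) (e j) = 0) {i₀ : ι}
    (hneg : ∀ i, i ≠ i₀ → B (e i) (e i) ≤ 0) (hsymm : ∀ x y : V, B x y = B y x)
    {h : V} (hh : 0 < B h h) {v : V} (hv : B h v = 0) : B v v ≤ 0 := by
  by_contra! hvv
  have hh₀ : e.repr h i₀ ≠ 0 := fun h₀ =>
    (apply_self_nonpos_of_repr_eq_zero e horth hneg h₀).not_gt hh
  set w := e.repr v i₀ • h - e.repr h i₀ • v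
  have hw₀ : e.repr w i₀ = 0 := by
    simp only [w, map_sub, map_smul, Finsupp.sub_apply, Finsupp.smul_apply, smul_eq_mul]
    ring
  have hww : B w w = e.repr v i₀ ^ 2 * B h h + e.repr h i₀ ^ 2 * B v v := by
    simp only [w, map_sub, map_smul, LinearMap.sub_apply, LinearMap.smul_apply, smul_eq_mul,
      hsymm v h, hv]
    ring
  have hww_pos : 0 < B w w := by
    rw [hww]
    exact add_pos_of_nonneg_of_pos (by positivity) (by positivity)
  exact (apply_self_nonpos_of_repr_eq_zero e horth hneg hw₀).not_gt hww_pos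

theorem sq_apply_le_of_apply_eq_zero {h : V} (hperp : ∀ v, B h v = 0 → B v v ≤ 0)
    (hsymm : ∀ x y : V, B x y = B y x) {u w : V} (hu : B h u = 0) (hw : B h w = 0) :
    B u w ^ 2 ≤ B u u * B w w := by
  have hpencil : ∀ t : K, B w w * (t * t) + 2 * B u w * t + B u u ≤ 0 := fun t => by
    have := hperp (u + t • w) (by simp [hu, hw])
    simp only [map_add, map_smul, LinearMap.add_apply, LinearMap.smul_apply, smul_eq_mul,
      hsymm w u] at this
    linear_combination this
  have := discrim_le_zero_of_nonpos hpencil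
  rw [discrim] at this
  linarith

/-- Nonnegativity of the Gram determinant of `(h, p, q)`, multiplied by `B h h`. -/
theorem sq_gram_le_of_apply_self_pos {h : V} (hperp : ∀ v, B h v = 0 → B v v ≤ 0)
    (hsymm : ∀ x y : V, B x y = B y x) (hh : 0 < B h h) (p q : V) :
    (B h h * B p q - B h p * B h q) ^ 2 ≤
      (B h h * B p p - B h p ^ 2) * (B h h * B q q - B h q ^ 2) := by
  have hproj : ∀ p, B h (B h h • p - B h p • h) = 0 := fun p => by
    simp only [map_sub, map_smul, smul_eq_mul]
    ring
  have hcs := sq_apply_le_of_apply_eq_zero hperp hsymm (hproj p) (hproj q)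
  simp only [map_sub, map_smul, LinearMap.sub_apply, LinearMap.smul_apply, smul_eq_mul,
    hsymm p h, hsymm q h] at hcs
  refine le_of_mul_le_mul_left ?_ (pow_pos hh 2)
  linear_combination hcs

theorem sq_le_of_mul_sq_add_sq_le {x y a b : K} (hx : 0 < x) (hy : 0 < y) (hab : a * b < 0)
    (H : x * (a ^ 2 + b ^ 2) ≤ -2 * x ^ 2 + 2 * y ^ 2 + 2 * a * b * y) :
    a ^ 2 ≤ 2 * y ^ 2 / x ∧ b ^ 2 ≤ 2 * y ^ 2 / x := by
  have haby : a * b * y < 0 := mul_neg_of_neg_of_pos hab hy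
  rw [le_div_iff₀ hx, le_div_iff₀ hx]
  constructor <;> nlinarith [sq_nonneg a, sq_nonneg b]

end OrderedField

theorem setOf_intCast_sq_le_finite (C : ℚ) :
    {q : ℚ | (∃ m : ℤ, q = m) ∧ q ^ 2 ≤ C}.Finite := by
  refine ((Set.finite_Icc (-⌈C⌉) ⌈C⌉).image (Int.cast : ℤ → ℚ)).subset ?_
  rintro _ ⟨⟨m, rfl⟩, hm⟩
  have hm' : m ^ 2 ≤ ⌈C⌉ := by exact_mod_cast hm.trans (Int.le_ceil C)
  have habs : |m| ≤ ⌈C⌉ := (Int.natCast_natAbs m ▸ Int.natAbs_le_self_sq m).trans hm'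
  exact ⟨m, abs_le.mp habs, rfl⟩

theorem stmt10_general {V : Type*} [AddCommGroup V] [Module ℚ V]
    (B : V →ₗ[ℚ] V →ₗ[ℚ] ℚ) (L : Submodule ℤ V) (n : ℕ)
    (hsymm : ∀ x y : V, B x y = B y x)
    (hint : ∀ x ∈ L, ∀ y ∈ L, ∃ m : ℤ, B x y = m)
    -- signature (1, n) via an orthogonal `ℚ`-basis
    (e : Module.Basis (Fin (n + 1)) ℚ V)
    (horth : ∀ i j, i ≠ j → B (e i) (e j) = 0)
    (hneg : ∀ i, i ≠ 0 → B (e i) (e i) < 0)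
    -- `f ∈ O⁺(L)`
    (f : V →ₗ[ℚ] V)
    (hiso : ∀ x y : V, B (f x) (f y) = B x y)
    (hfL : ∀ x ∈ L, f x ∈ L)
    (hplus : ∀ x : V, 0 < B x x → 0 < B x (f x))
    (h : V) (hhL : h ∈ L) (hh : 0 < B h h) :
    (∀ r ∈ L, B r r = -2 → B r h * B r (f h) < 0 →
      B h h * ((B h r) ^ 2 + (B (f h) r) ^ 2) ≤
        -2 * (B h h) ^ 2 + 2 * (B h (f h)) ^ 2 +
          2 * (B h r) * (B (f h) r) * (B h (f h))) ∧
    {p : ℚ × ℚ | ∃ r ∈ L,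
        B r r = -2 ∧ B r h * B r (f h) < 0 ∧ p = (B r h, B r (f h))}.Finite := by
  have hperp : ∀ v, B h v = 0 → B v v ≤ 0 := fun v =>
    apply_self_nonpos_of_apply_eq_zero e horth (fun i hi => (hneg i hi).le) hsymm hh
  have hineq : ∀ r ∈ L, B r r = -2 → B r h * B r (f h) < 0 →
      B h h * ((B h r) ^ 2 + (B (f h) r) ^ 2) ≤
        -2 * (B h h) ^ 2 + 2 * (B h (f h)) ^ 2 +
          2 * (B h r) * (B (f h) r) * (B h (f h)) := by
    intro r _ hr _
    have hgram := sq_gram_le_of_apply_self_pos hperp hsymm hh (f h) r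
    rw [hiso, hr] at hgram
    exact le_of_mul_le_mul_left (by linear_combination hgram) hh
  refine ⟨hineq, ?_⟩
  have hfin := setOf_intCast_sq_le_finite (2 * B h (f h) ^ 2 / B h h)
  refine (hfin.prod hfin).subset ?_
  rintro _ ⟨r, hrL, hr, hsgn, rfl⟩
  have hbound := hineq r hrL hr hsgn
  rw [hsymm h r, hsymm (f h) r] at hbound
  obtain ⟨ha, hb⟩ := sq_le_of_mul_sq_add_sq_le hh (hplus h hh) hsgn hbound
  exact ⟨⟨hint r hrL h hhL, ha⟩, hint r hrL (f h) (hfL h hhL), hb⟩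

/-- Let `L` be a hyperbolic lattice of signature `(1,n)`, `f ∈ O⁺(L)`,
and `h ∈ L` with `(h,h) > 0`.  If `r ∈ L` satisfies `r² = -2` and `(r,h)·(r,f(h)) < 0`,
then with `x = (h,h)`, `y = (h,f(h))`, `a = (h,r)`, `b = (f(h),r)` the inequality
`-2x² + 2y² + 2aby ≥ x(a² + b²)` holds; in particular the set of pairs
`((r,h),(r,f(h)))`, as `r` ranges over such roots, is finite. -/
theorem stmt10 {V : Type*} [AddCommGroup V] [Module ℚ V] [FiniteDimensional ℚ V]
    (B : V →ₗ[ℚ] V →ₗ[ℚ] ℚ) (L : Submodule ℤ V) (n : ℕ)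
    (bL : Module.Basis (Fin (n + 1)) ℤ L)
    (hfull : Submodule.span ℚ (L : Set V) = ⊤)
    (hsymm : ∀ x y : V, B x y = B y x)
    (hint : ∀ x ∈ L, ∀ y ∈ L, ∃ m : ℤ, B x y = m)
    -- signature (1, n) via an orthogonal `ℚ`-basis
    (e : Module.Basis (Fin (n + 1)) ℚ V)
    (horth : ∀ i j, i ≠ j → B (e i) (e j) = 0)
    (hpos : 0 < B (e 0) (e 0)) (hneg : ∀ i, i ≠ 0 → B (e i) (e i) < 0)
    -- `f ∈ O⁺(L)`
    (f : V →ₗ[ℚ] V)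
    (hiso : ∀ x y : V, B (f x) (f y) = B x y)
    (hfL : ∀ x ∈ L, f x ∈ L) (hfLsurj : ∀ y ∈ L, ∃ x ∈ L, f x = y)
    (hplus : ∀ x : V, 0 < B x x → 0 < B x (f x))
    (h : V) (hhL : h ∈ L) (hh : 0 < B h h) :
    (∀ r ∈ L, B r r = -2 → B r h * B r (f h) < 0 →
      B h h * ((B h r) ^ 2 + (B (f h) r) ^ 2) ≤
        -2 * (B h h) ^ 2 + 2 * (B h (f h)) ^ 2 +
          2 * (B h r) * (B (f h) r) * (B h (f h))) ∧
    {p : ℚ × ℚ | ∃ r ∈ L,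
        B r r = -2 ∧ B r h * B r (f h) < 0 ∧ p = (B r h, B r (f h))}.Finite :=
  stmt10_general B L n hsymm hint e horth hneg f hiso hfL hplus h hhL hh
end

section
/- Let L be an even hyperbolic lattice, f ∈ O⁺(L) positive (i.e., f preserves some chamber of the positive cone cut out by root hyperplanes), and L′ ⊆ L a hyperbolic sublattice (of signature (1, m)) with f(L′) = L′. Then the restriction f|L′ ∈ O⁺(L′) is positive. -/
/-!
Put `W := span ℝ L'`. Since `B` has signature `(1, n)` and `W` contains the positive vector
`e' 0`, the form is nondegenerate on `W` and negative semidefinite on `W^⊥`. Hence the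
`B`-orthogonal projection `π` onto `W` keeps positive vectors positive and does not change
`B r x` for roots `r ∈ L'`: it maps the regular cone of `L` into that of `L'`, so every chamber
of `L` into a chamber of `L'`. As the isometry `f` preserves `W` and `W^⊥`, it commutes with
`π`; so if `f` fixes the chamber of `y`, it sends the chamber of `π y` to the one containing
`f (π y) = π (f y)`, which is the chamber of `π y` again.
-/

open Module

namespace LinearMap.BilinForm

variable {V : Type*} [AddCommGroup V] [Module ℝ V] {B : LinearMap.BilinForm ℝ V}

lemma apply_self_eq_sum_of_iIsOrtho {ι : Type*} [Fintype ι] {e : Basis ι ℝ V}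
    (ho : B.iIsOrtho e) (x : V) :
    B x x = ∑ i, e.repr x i * e.repr x i * B (e i) (e i) := by
  conv_lhs => rw [← e.sum_repr x]
  simp only [map_sum, LinearMap.sum_apply, map_smul, LinearMap.smul_apply, smul_eq_mul]
  refine Finset.sum_congr rfl fun i _ => ?_
  rw [Finset.sum_eq_single i (fun j _ hji => by simp [ho hji]) (by simp)]
  ring

lemma nondegenerate_of_iIsOrtho_of_pos_of_neg {ι : Type*} {e : Basis ι ℝ V}
    (ho : B.iIsOrtho e) {i₀ : ι} (hpos : 0 < B (e i₀) (e i₀))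
    (hneg : ∀ i, i ≠ i₀ → B (e i) (e i) < 0) : B.Nondegenerate := by
  refine (iIsOrtho.nondegenerate_iff_not_isOrtho_basis_self B e ho).2 fun i => ?_
  rcases eq_or_ne i i₀ with rfl | hi
  exacts [hpos.ne', (hneg i hi).ne]

lemma _root_.LinearMap.Nondegenerate.injective_of_isOrthogonal (hB : B.Nondegenerate)
    {f : V →ₗ[ℝ] V} (hf : B.IsOrthogonal f) : Function.Injective f :=
  (injective_iff_map_eq_zero f).2 fun x hx =>
    hB.1 x fun y => by rw [← hf x y, hx, map_zero, LinearMap.zero_apply]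

section Signature

variable {n : ℕ} {e : Basis (Fin (n + 1)) ℝ V} (ho : B.iIsOrtho e)
  (hneg : ∀ i, i ≠ 0 → B (e i) (e i) < 0)
include ho hneg

lemma apply_self_nonpos_of_repr_zero {x : V} (hx : e.repr x 0 = 0) : B x x ≤ 0 := by
  rw [apply_self_eq_sum_of_iIsOrtho ho, Fin.sum_univ_succ, hx, zero_mul, zero_mul, zero_add]
  exact Finset.sum_nonpos fun i _ =>
    mul_nonpos_of_nonneg_of_nonpos (mul_self_nonneg _) (hneg _ i.succ_ne_zero).le

lemma apply_self_nonpos_of_isOrtho_of_pos (hB : B.IsSymm) {u w : V} (hu : 0 < B u u)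
    (huw : B u w = 0) : B w w ≤ 0 := by
  set a := e.repr w 0
  set b := e.repr u 0
  -- `a • u - b • w` lies in `span {e 1, …, e n}`, where `B` is negative semidefinite.
  have hv : B (a • u - b • w) (a • u - b • w) = a * a * B u u + b * b * B w w := by
    simp only [map_sub, map_smul, LinearMap.sub_apply, LinearMap.smul_apply, smul_eq_mul,
      huw, hB.eq w u]
    ring
  have hv_nonpos : B (a • u - b • w) (a • u - b • w) ≤ 0 :=
    apply_self_nonpos_of_repr_zero ho hneg (by simp [a, b, mul_comm])
  by_contra! hw
  have ha : a * a * B u u = 0 := by nlinarith [mul_self_nonneg a, mul_self_nonneg b]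
  have ha0 : a = 0 := mul_self_eq_zero.mp ((mul_eq_zero.mp ha).resolve_right hu.ne')
  exact hw.not_ge (apply_self_nonpos_of_repr_zero ho hneg ha0)

end Signature

lemma orthogonal_mem_invtSubmodule {f : V →ₗ[ℝ] V} (hf : B.IsOrthogonal f)
    {W : Submodule ℝ V} (hW : W ≤ W.map f) : B.orthogonal W ∈ Module.End.invtSubmodule f := by
  rw [Module.End.mem_invtSubmodule]
  intro m hm
  rw [Submodule.mem_comap, mem_orthogonal_iff]
  intro r hr
  obtain ⟨u, hu, rfl⟩ := hW hr
  rw [mem_orthogonal_iff] at hm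
  rw [hf]
  exact hm u hu

section Projection

variable {W : Submodule ℝ V} (hc : IsCompl W (B.orthogonal W))
include hc

lemma commute_projection_orthogonal {f : V →ₗ[ℝ] V} (hf : B.IsOrthogonal f)
    (hW : W.map f = W) : Commute (W.projection _ hc) f := by
  refine (LinearMap.IsIdempotentElem.commute_iff
    (Submodule.isIdempotentElem_projection hc)).2 ⟨?_, ?_⟩
  · rw [Submodule.range_projection, Module.End.mem_invtSubmodule_iff_map_le]
    exact hW.le
  · rw [Submodule.ker_projection]
    exact orthogonal_mem_invtSubmodule hf hW.ge

lemma apply_projection_orthogonal {r : V} (hr : r ∈ W) (x : V) :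
    B r (W.projection _ hc x) = B r x := by
  have h := mem_orthogonal_iff.1 (Submodule.sub_projection_mem hc x) r hr
  rw [map_sub, sub_eq_zero] at h
  exact h.symm

lemma projection_apply_self_pos (hB : B.IsSymm) {n : ℕ} {e : Basis (Fin (n + 1)) ℝ V}
    (ho : B.iIsOrtho e) (hneg : ∀ i, i ≠ 0 → B (e i) (e i) < 0) {u : V} (hu : u ∈ W)
    (hu_pos : 0 < B u u) {x : V} (hx : 0 < B x x) :
    0 < B (W.projection _ hc x) (W.projection _ hc x) := by
  set p := W.projection _ hc x
  have hw : x - p ∈ B.orthogonal W := Submodule.sub_projection_mem hc x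
  have hpw : B p (x - p) = 0 := mem_orthogonal_iff.1 hw p (Submodule.projection_apply_mem hc x)
  have hww : B (x - p) (x - p) ≤ 0 :=
    apply_self_nonpos_of_isOrtho_of_pos ho hneg hB hu_pos (mem_orthogonal_iff.1 hw u hu)
  have hsplit : B x x = B p p + B (x - p) (x - p) := by
    have hxp : x = p + (x - p) := (add_sub_cancel p x).symm
    conv_lhs => rw [hxp]
    simp only [map_add, LinearMap.add_apply, hB.eq (x - p) p, hpw]
    ring
  linarith

end Projection

/-- Both nappes of `{x | 0 < B x x}` minus the hyperplanes orthogonal to the roots in `Λ`;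
the chambers are its connected components. -/
def regularCone (B : LinearMap.BilinForm ℝ V) (Λ : Set V) : Set V :=
  {x | 0 < B x x ∧ ∀ r ∈ Λ, B r r = -2 → B r x ≠ 0}

lemma preimage_regularCone {f : V →ₗ[ℝ] V} (hf : B.IsOrthogonal f) {Λ : Set V}
    (hΛ : f '' Λ = Λ) : f ⁻¹' regularCone B Λ = regularCone B Λ := by
  have hf' : ∀ a b, B (f a) (f b) = B a b := hf
  ext x
  simp only [regularCone, Set.mem_preimage, Set.mem_ofPred_eq, hf']
  conv_lhs => rw [← hΛ]
  simp only [Set.forall_mem_image, hf']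

lemma preimage_inter_regularCone {f : V →ₗ[ℝ] V} (hf : B.IsOrthogonal f)
    (hinj : Function.Injective f) {W : Submodule ℝ V} (hW : W.map f = W) {Λ : Set V}
    (hΛ : f '' Λ = Λ) :
    f ⁻¹' ((W : Set V) ∩ regularCone B Λ) = (W : Set V) ∩ regularCone B Λ := by
  rw [Set.preimage_inter, preimage_regularCone hf hΛ, ← Submodule.comap_coe]
  conv_lhs => rw [← hW, Submodule.comap_map_eq_of_injective hinj]

lemma mapsTo_projection_regularCone (hB : B.IsSymm) {n : ℕ} {e : Basis (Fin (n + 1)) ℝ V}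
    (ho : B.iIsOrtho e) (hneg : ∀ i, i ≠ 0 → B (e i) (e i) < 0) {W : Submodule ℝ V}
    (hc : IsCompl W (B.orthogonal W)) {u : V} (hu : u ∈ W) (hu_pos : 0 < B u u)
    {Λ Λ' : Set V} (hΛ'W : Λ' ⊆ W) (hΛ'Λ : Λ' ⊆ Λ) :
    Set.MapsTo (W.projection _ hc) (regularCone B Λ) ((W : Set V) ∩ regularCone B Λ') := by
  rintro x ⟨hx_pos, hx_roots⟩
  refine ⟨Submodule.projection_apply_mem hc x,
    projection_apply_self_pos hc hB ho hneg hu hu_pos hx_pos, fun r hr hrr => ?_⟩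
  rw [apply_projection_orthogonal hc (hΛ'W hr)]
  exact hx_roots r (hΛ'Λ hr) hrr

end LinearMap.BilinForm

section Topology

variable {X Y : Type*} [TopologicalSpace X] [TopologicalSpace Y]

lemma Homeomorph.image_connectedComponentIn_eq_self (h : X ≃ₜ X) {S : Set X}
    (hS : h ⁻¹' S = S) {x : X} (hx : x ∈ S) (hhx : h x ∈ connectedComponentIn S x) :
    h '' connectedComponentIn S x = connectedComponentIn S x := by
  have hS' : h '' S = S := by
    conv_lhs => rw [← hS]
    exact h.image_preimage S
  rw [h.image_connectedComponentIn hx, hS', connectedComponentIn_eq hhx]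

lemma Function.Semiconj.mem_connectedComponentIn {π : X → Y} {f : X → X} {g : Y → Y}
    (hπf : Function.Semiconj π f g) {S : Set X} {T : Set Y} (hπ : ContinuousOn π S)
    (hST : Set.MapsTo π S T) {x : X} (hx : x ∈ S) (hfx : f x ∈ connectedComponentIn S x) :
    g (π x) ∈ connectedComponentIn T (π x) := by
  rw [← hπf x]
  exact connectedComponentIn_mono _ hST.image_subset
    (hπ.image_connectedComponentIn_subset hx (Set.mem_image_of_mem π hfx))

end Topology

theorem stmt12_general (d n m : ℕ)
    (B : (Fin d → ℝ) →ₗ[ℝ] (Fin d → ℝ) →ₗ[ℝ] ℝ)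
    (L : Submodule ℤ (Fin d → ℝ))
    (hsymm : ∀ x y, B x y = B y x)
    -- signature (1, n) via an orthogonal basis
    (e : Module.Basis (Fin (n + 1)) ℝ (Fin d → ℝ))
    (horth : ∀ i j, i ≠ j → B (e i) (e j) = 0)
    (hpos : 0 < B (e 0) (e 0)) (hneg : ∀ i, i ≠ 0 → B (e i) (e i) < 0)
    -- `f` an isometry of `L`
    (f : (Fin d → ℝ) →ₗ[ℝ] (Fin d → ℝ))
    (hiso : ∀ x y, B (f x) (f y) = B x y)
    -- `f` is positive: it maps some chamber to itself
    (hpositive : ∃ x ∈ {x : Fin d → ℝ | 0 < B x x ∧ ∀ r ∈ L, B r r = -2 → B r x ≠ 0},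
      f '' connectedComponentIn
          {x : Fin d → ℝ | 0 < B x x ∧ ∀ r ∈ L, B r r = -2 → B r x ≠ 0} x =
        connectedComponentIn
          {x : Fin d → ℝ | 0 < B x x ∧ ∀ r ∈ L, B r r = -2 → B r x ≠ 0} x)
    -- the `f`-stable hyperbolic sublattice `L'` of signature `(1, m)`
    (L' : Submodule ℤ (Fin d → ℝ)) (hL'L : L' ≤ L)
    (hfL' : ∀ x ∈ L', f x ∈ L') (hfL'surj : ∀ y ∈ L', ∃ x ∈ L', f x = y)
    (e' : Module.Basis (Fin (m + 1)) ℝ (Submodule.span ℝ (L' : Set (Fin d → ℝ))))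
    (horth' : ∀ i j, i ≠ j → B (e' i) (e' j) = 0)
    (hpos' : 0 < B (e' 0) (e' 0)) (hneg' : ∀ i, i ≠ 0 → B (e' i) (e' i) < 0) :
    ∃ x ∈ {x : Fin d → ℝ | x ∈ Submodule.span ℝ (L' : Set (Fin d → ℝ)) ∧
        0 < B x x ∧ ∀ r ∈ L', B r r = -2 → B r x ≠ 0},
      f '' connectedComponentIn
          {x : Fin d → ℝ | x ∈ Submodule.span ℝ (L' : Set (Fin d → ℝ)) ∧
            0 < B x x ∧ ∀ r ∈ L', B r r = -2 → B r x ≠ 0} x =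
        connectedComponentIn
          {x : Fin d → ℝ | x ∈ Submodule.span ℝ (L' : Set (Fin d → ℝ)) ∧
            0 < B x x ∧ ∀ r ∈ L', B r r = -2 → B r x ≠ 0} x := by
  open LinearMap.BilinForm in
  let W := Submodule.span ℝ (L' : Set (Fin d → ℝ))
  have hB : IsSymm B := ⟨hsymm⟩
  have ho : iIsOrtho B e := fun i j hij => horth i j hij
  have hinj : Function.Injective f :=
    (nondegenerate_of_iIsOrtho_of_pos_of_neg ho hpos hneg).injective_of_isOrthogonal hiso
  have hL' : f '' L' = L' := (Set.image_subset_iff.2 hfL').antisymm hfL'surj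
  have hW : W.map f = W := by rw [Submodule.map_span, hL']
  have hc : IsCompl W (orthogonal B W) :=
    isCompl_orthogonal_of_restrict_nondegenerate hB.isRefl
      (nondegenerate_of_iIsOrtho_of_pos_of_neg (B := restrict B W) (fun i j hij => horth' i j hij)
        hpos' hneg')
  have hπ := mapsTo_projection_regularCone hB ho hneg hc (e' 0).2 hpos' Submodule.subset_span
    hL'L
  let F := (LinearEquiv.ofInjectiveEndo f hinj).toContinuousLinearEquiv.toHomeomorph
  obtain ⟨y, hy, hfC⟩ := hpositive
  have hfy : f y ∈ connectedComponentIn (regularCone B L) y :=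
    hfC ▸ Set.mem_image_of_mem f (mem_connectedComponentIn hy)
  refine ⟨_, hπ hy, F.image_connectedComponentIn_eq_self
    (preimage_inter_regularCone hiso hinj hW hL') (hπ hy) ?_⟩
  exact Function.Semiconj.mem_connectedComponentIn
    (fun x => LinearMap.congr_fun (commute_projection_orthogonal hc hiso hW).eq x)
    (LinearMap.continuous_of_finiteDimensional _).continuousOn hπ hy hfy

/-- Let `L` be an even hyperbolic lattice (realized in `ℝ^d`),
`f ∈ O⁺(L)` positive (it preserves some chamber of the positive cone cut out by the root
hyperplanes), and `L' ⊆ L` an `f`-stable hyperbolic sublattice of signature `(1,m)`.  Then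
the restriction `f|L'` is positive: it preserves some chamber cut out in the positive cone
of `L' ⊗ ℝ` by the root hyperplanes of `L'`. -/
theorem stmt12 (d n m : ℕ)
    (B : (Fin d → ℝ) →ₗ[ℝ] (Fin d → ℝ) →ₗ[ℝ] ℝ)
    (L : Submodule ℤ (Fin d → ℝ))
    (bL : Module.Basis (Fin (n + 1)) ℤ L)
    (hfull : Submodule.span ℝ (L : Set (Fin d → ℝ)) = ⊤)
    (hsymm : ∀ x y, B x y = B y x)
    (hint : ∀ x ∈ L, ∀ y ∈ L, ∃ k : ℤ, B x y = k)
    (heven : ∀ x ∈ L, ∃ k : ℤ, B x x = 2 * k)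
    -- signature (1, n) via an orthogonal basis
    (e : Module.Basis (Fin (n + 1)) ℝ (Fin d → ℝ))
    (horth : ∀ i j, i ≠ j → B (e i) (e j) = 0)
    (hpos : 0 < B (e 0) (e 0)) (hneg : ∀ i, i ≠ 0 → B (e i) (e i) < 0)
    -- `f` an isometry of `L`
    (f : (Fin d → ℝ) →ₗ[ℝ] (Fin d → ℝ))
    (hiso : ∀ x y, B (f x) (f y) = B x y)
    (hfL : ∀ x ∈ L, f x ∈ L) (hfLsurj : ∀ y ∈ L, ∃ x ∈ L, f x = y)
    -- `f` is positive: it maps some chamber to itself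
    (hpositive : ∃ x ∈ {x : Fin d → ℝ | 0 < B x x ∧ ∀ r ∈ L, B r r = -2 → B r x ≠ 0},
      f '' connectedComponentIn
          {x : Fin d → ℝ | 0 < B x x ∧ ∀ r ∈ L, B r r = -2 → B r x ≠ 0} x =
        connectedComponentIn
          {x : Fin d → ℝ | 0 < B x x ∧ ∀ r ∈ L, B r r = -2 → B r x ≠ 0} x)
    -- the `f`-stable hyperbolic sublattice `L'` of signature `(1, m)`
    (L' : Submodule ℤ (Fin d → ℝ)) (hL'L : L' ≤ L)
    (hfL' : ∀ x ∈ L', f x ∈ L') (hfL'surj : ∀ y ∈ L', ∃ x ∈ L', f x = y)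
    (e' : Module.Basis (Fin (m + 1)) ℝ (Submodule.span ℝ (L' : Set (Fin d → ℝ))))
    (horth' : ∀ i j, i ≠ j → B (e' i) (e' j) = 0)
    (hpos' : 0 < B (e' 0) (e' 0)) (hneg' : ∀ i, i ≠ 0 → B (e' i) (e' i) < 0) :
    ∃ x ∈ {x : Fin d → ℝ | x ∈ Submodule.span ℝ (L' : Set (Fin d → ℝ)) ∧
        0 < B x x ∧ ∀ r ∈ L', B r r = -2 → B r x ≠ 0},
      f '' connectedComponentIn
          {x : Fin d → ℝ | x ∈ Submodule.span ℝ (L' : Set (Fin d → ℝ)) ∧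
            0 < B x x ∧ ∀ r ∈ L', B r r = -2 → B r x ≠ 0} x =
        connectedComponentIn
          {x : Fin d → ℝ | x ∈ Submodule.span ℝ (L' : Set (Fin d → ℝ)) ∧
            0 < B x x ∧ ∀ r ∈ L', B r r = -2 → B r x ≠ 0} x :=
  stmt12_general d n m B L hsymm e horth hpos hneg f hiso hpositive L' hL'L hfL' hfL'surj e' horth'
    hpos' hneg'
end

section
/- Let D(n) denote the minimum D ≥ 0 such that GL(D, ℤ) contains an element of order n (with D(1) = 0). Then D(2) = 1, and for even n > 2 with n/2 odd, D(n) = D(n/2); moreover for n = p₁^{m₁}⋯p_s^{m_s} with distinct primes p_i, if n is odd or 4 | n, then D(n) = Σ_i φ(p_i^{m_i}) where φ is Euler's totient function. -/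
/-!
Multiplication by the root on `ℤ[X]/Φ_k` is an automorphism of order `k` of a free module of
rank `φ k`, and block sums over the prime powers `p^m ∥ n` realise order `n` in rank
`∑ φ(p^m)`. Conversely, over `ℚ` the minimal polynomial of an element of order `n` is a
product of distinct cyclotomic polynomials `Φ_d`, `d ∈ S`, with `n ∣ lcm S`, so
`∑_{d ∈ S} φ d ≤ D`. Every `p^m ∥ n` divides some `d ∈ S`, and because `φ(p^m) ≥ 2` when
`n` is odd or `4 ∣ n`, the prime powers sent to one `d` contribute
`∑ φ(p^m) ≤ ∏ φ(p^m) ≤ φ d`.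
For `n = 2m` with `m` odd, `g ↦ g²` and `g ↦ -g` exchange elements of orders `2m` and `m`.
-/

/-- `D n` is the minimum `D ≥ 0` such that `GL(D, ℤ)` contains an element of order `n`,
i.e. the minimal rank of a free `ℤ`-module admitting an automorphism of exact order `n`. -/
noncomputable def minOrderRank (n : ℕ) : ℕ :=
  sInf {D : ℕ | ∃ g : GL (Fin D) ℤ, orderOf g = n}

open Polynomial Matrix
open scoped Nat Function

theorem Finset.sum_le_prod_of_two_le {ι : Type*} {s : Finset ι} {f : ι → ℕ}
    (h : ∀ i ∈ s, 2 ≤ f i) : ∑ i ∈ s, f i ≤ ∏ i ∈ s, f i := by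
  rcases s.eq_empty_or_nonempty with rfl | hs
  · simp
  induction hs using Finset.Nonempty.cons_induction with
  | singleton a => simp
  | cons a s ha hs ih =>
    rw [Finset.sum_cons, Finset.prod_cons]
    have hsum := ih fun i hi => h i (Finset.mem_cons_of_mem hi)
    have hfa := h a (Finset.mem_cons_self a s)
    obtain ⟨b, hb⟩ := hs
    have hsum2 : 2 ≤ ∑ i ∈ s, f i :=
      (h b (Finset.mem_cons_of_mem hb)).trans (Finset.single_le_sum (fun _ _ => Nat.zero_le _) hb)
    nlinarith

theorem Nat.prod_totient_le_totient_prod {ι : Type*} (s : Finset ι) (f : ι → ℕ) :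
    ∏ i ∈ s, φ (f i) ≤ φ (∏ i ∈ s, f i) := by
  classical
  induction s using Finset.induction_on with
  | empty => simp
  | insert a s ha ih =>
    rw [Finset.prod_insert ha, Finset.prod_insert ha]
    exact (Nat.mul_le_mul_left _ ih).trans (Nat.totient_super_multiplicative _ _)

theorem Nat.sum_totient_le_totient_of_dvd {ι : Type*} {s : Finset ι} {q : ι → ℕ} {d : ℕ}
    (hd : d ≠ 0) (hq : (s : Set ι).Pairwise (Nat.Coprime on q)) (hdvd : ∀ i ∈ s, q i ∣ d)
    (h2 : ∀ i ∈ s, 2 ≤ φ (q i)) : ∑ i ∈ s, φ (q i) ≤ φ d :=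
  calc ∑ i ∈ s, φ (q i) ≤ ∏ i ∈ s, φ (q i) := Finset.sum_le_prod_of_two_le h2
    _ ≤ φ (∏ i ∈ s, q i) := Nat.prod_totient_le_totient_prod s q
    _ ≤ φ d := Nat.le_of_dvd (Nat.totient_pos.2 (Nat.pos_of_ne_zero hd))
        (Nat.totient_dvd_of_dvd (Finset.lcm_eq_prod hq ▸ Finset.lcm_dvd hdvd))

theorem Nat.pairwise_coprime_ordProj (n : ℕ) :
    (n.primeFactors : Set ℕ).Pairwise (Nat.Coprime on fun p => p ^ n.factorization p) :=
  fun _ hp _ hq hpq =>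
    Nat.coprime_pow_primes _ _ (Nat.prime_of_mem_primeFactors hp)
      (Nat.prime_of_mem_primeFactors hq) hpq

theorem Nat.factorization_pos_of_mem_primeFactors {n p : ℕ} (hp : p ∈ n.primeFactors) :
    0 < n.factorization p :=
  Nat.pos_of_ne_zero (Finsupp.mem_support_iff.1 (by rwa [Nat.support_factorization]))

theorem Nat.exists_mem_ordProj_dvd_of_dvd_lcm {S : Finset ℕ} (hS : 0 ∉ S) {n p : ℕ}
    (hp : p ∈ n.primeFactors) (hn : n ∣ S.lcm id) :
    ∃ d ∈ S, p ^ n.factorization p ∣ d := by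
  have hp' := Nat.prime_of_mem_primeFactors hp
  have hL : S.lcm id ≠ 0 := by simpa [Finset.lcm_eq_zero_iff] using hS
  have hle : n.factorization p ≤ S.sup fun d => d.factorization p := by
    rw [← Finset.factorization_lcm (fun d hd h0 => hS (h0 ▸ hd))]
    exact (hp'.pow_dvd_iff_le_factorization hL).1 ((Nat.ordProj_dvd n p).trans hn)
  obtain ⟨d, hd, hpd⟩ :=
    (Finset.le_sup_iff (Nat.factorization_pos_of_mem_primeFactors hp)).1 hle
  exact ⟨d, hd, (hp'.pow_dvd_iff_le_factorization (ne_of_mem_of_not_mem hd hS)).2 hpd⟩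

theorem Nat.sum_totient_ordProj_le_of_dvd_lcm {n : ℕ} {S : Finset ℕ} (hS : 0 ∉ S)
    (hn : n ∣ S.lcm id) (h2 : ∀ p ∈ n.primeFactors, 2 ≤ φ (p ^ n.factorization p)) :
    ∑ p ∈ n.primeFactors, φ (p ^ n.factorization p) ≤ ∑ d ∈ S, φ d := by
  classical
  choose! f hfS hfdvd using fun p (hp : p ∈ n.primeFactors) =>
    Nat.exists_mem_ordProj_dvd_of_dvd_lcm hS hp hn
  calc ∑ p ∈ n.primeFactors, φ (p ^ n.factorization p)
      = ∑ d ∈ S, ∑ p ∈ n.primeFactors with f p = d, φ (p ^ n.factorization p) :=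
        (Finset.sum_fiberwise_of_maps_to hfS _).symm
    _ ≤ ∑ d ∈ S, φ d := Finset.sum_le_sum fun d hd =>
        Nat.sum_totient_le_totient_of_dvd (ne_of_mem_of_not_mem hd hS)
          ((Nat.pairwise_coprime_ordProj n).mono (Finset.coe_subset.2 (Finset.filter_subset _ _)))
          (fun p hp => (Finset.mem_filter.1 hp).2 ▸ hfdvd p (Finset.mem_filter.1 hp).1)
          (fun p hp => h2 p (Finset.mem_filter.1 hp).1)

theorem Nat.two_le_totient_ordProj {n p : ℕ} (hn : Odd n ∨ 4 ∣ n)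
    (hp : p ∈ n.primeFactors) : 2 ≤ φ (p ^ n.factorization p) := by
  have hp' := Nat.prime_of_mem_primeFactors hp
  have hv := Nat.factorization_pos_of_mem_primeFactors hp
  have hgt : 1 < p ^ n.factorization p := Nat.one_lt_pow hv.ne' hp'.one_lt
  have hne : p ^ n.factorization p ≠ 2 := by
    intro h
    obtain ⟨rfl, hv1⟩ := Nat.prime_two.pow_eq_iff.1 h
    rcases hn with hodd | h4
    · exact hodd.not_two_dvd_nat (Nat.dvd_of_mem_primeFactors hp)
    · have := (Nat.prime_two.pow_dvd_iff_le_factorization ((Nat.mem_primeFactors.1 hp).2.2)).1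
        (show 2 ^ 2 ∣ n from h4)
      omega
  have hpos := Nat.totient_pos.2 (zero_lt_one.trans hgt)
  by_contra! hlt
  have := Nat.totient_eq_one_iff.1 (show φ (p ^ n.factorization p) = 1 by omega)
  omega

theorem Polynomial.prod_cyclotomic_dvd_X_pow_sub_one (R : Type*) [CommRing R] {S : Finset ℕ}
    {L : ℕ} (hL : L ≠ 0) (hS : ∀ d ∈ S, d ∣ L) :
    ∏ d ∈ S, cyclotomic d R ∣ X ^ L - 1 := by
  rw [← prod_cyclotomic_eq_X_pow_sub_one (Nat.pos_of_ne_zero hL)]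
  exact Finset.prod_dvd_prod_of_subset _ _ _ fun d hd => Nat.mem_divisors.2 ⟨hS d hd, hL⟩

open scoped Classical in
theorem Polynomial.dvd_prod_cyclotomic_filter_of_dvd {μ : ℚ[X]} {n : ℕ} (hn : 0 < n)
    (h : μ ∣ X ^ n - 1) :
    μ ∣ ∏ d ∈ n.divisors with cyclotomic d ℚ ∣ μ, cyclotomic d ℚ := by
  rw [← prod_cyclotomic_eq_X_pow_sub_one hn,
    ← Finset.prod_filter_mul_prod_filter_not n.divisors (fun d => cyclotomic d ℚ ∣ μ)] at h
  refine (IsCoprime.prod_right fun d hd => ?_).dvd_of_dvd_mul_right h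
  rw [Finset.mem_filter] at hd
  exact ((cyclotomic.irreducible_rat (Nat.pos_of_mem_divisors hd.1)).coprime_iff_not_dvd.2
    hd.2).symm

theorem exists_divisors_sum_totient_le_natDegree_minpoly {A : Type*} [Ring A] [Algebra ℚ A]
    {x : A} {n : ℕ} (hn : 0 < n) (hx : orderOf x = n) :
    ∃ S ⊆ n.divisors, n ∣ S.lcm id ∧ ∑ d ∈ S, φ d ≤ (minpoly ℚ x).natDegree := by
  classical
  have hxn : x ^ n = 1 := hx ▸ pow_orderOf_eq_one x
  have hpow : ∀ k, minpoly ℚ x ∣ X ^ k - 1 ↔ x ^ k = 1 := fun k => by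
    simp [minpoly.dvd_iff, sub_eq_zero]
  have hint : IsIntegral ℚ x := ⟨X ^ n - 1, monic_X_pow_sub_C 1 hn.ne', by simp [hxn]⟩
  set S := n.divisors.filter fun d => cyclotomic d ℚ ∣ minpoly ℚ x
  have hS0 : 0 ∉ S := fun h => by simp [S] at h
  refine ⟨S, Finset.filter_subset _ _, ?_, ?_⟩
  · rw [← hx]
    refine orderOf_dvd_of_pow_eq_one ((hpow _).1 ?_)
    exact (dvd_prod_cyclotomic_filter_of_dvd hn ((hpow n).2 hxn)).trans
      (prod_cyclotomic_dvd_X_pow_sub_one ℚ (by simpa [Finset.lcm_eq_zero_iff] using hS0)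
        fun d hd => Finset.dvd_lcm hd)
  · have hprod : ∏ d ∈ S, cyclotomic d ℚ ∣ minpoly ℚ x :=
      Finset.prod_dvd_of_coprime (fun a _ b _ hab => cyclotomic.isCoprime_rat hab)
        fun d hd => (Finset.mem_filter.1 hd).2
    calc ∑ d ∈ S, φ d = (∏ d ∈ S, cyclotomic d ℚ).natDegree := by
          rw [natDegree_prod _ _ fun d _ => cyclotomic_ne_zero d ℚ]
          simp only [natDegree_cyclotomic]
      _ ≤ (minpoly ℚ x).natDegree := natDegree_le_of_dvd hprod (minpoly.ne_zero hint)

theorem Matrix.exists_divisors_sum_totient_le_card {ι : Type*} [Fintype ι] [DecidableEq ι]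
    {A : Matrix ι ι ℚ} {n : ℕ} (hn : 0 < n) (hA : orderOf A = n) :
    ∃ S ⊆ n.divisors, n ∣ S.lcm id ∧ ∑ d ∈ S, φ d ≤ Fintype.card ι := by
  obtain ⟨S, hSn, hlcm, hdeg⟩ := exists_divisors_sum_totient_le_natDegree_minpoly hn hA
  refine ⟨S, hSn, hlcm, hdeg.trans ?_⟩
  rw [← A.charpoly_natDegree_eq_dim]
  exact natDegree_le_of_dvd A.minpoly_dvd_charpoly A.charpoly_monic.ne_zero

theorem sum_totient_ordProj_le_card_of_orderOf_eq {ι : Type*} [Fintype ι] [DecidableEq ι]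
    {n : ℕ} (hn : Odd n ∨ 4 ∣ n) (g : GL ι ℤ) (hg : orderOf g = n) :
    ∑ p ∈ n.primeFactors, φ (p ^ n.factorization p) ≤ Fintype.card ι := by
  rcases Nat.eq_zero_or_pos n with rfl | hn0
  · simp
  have hA : orderOf ((g : Matrix ι ι ℤ).map (Int.cast : ℤ → ℚ)) = n := by
    rw [← hg, ← orderOf_units]
    exact orderOf_injective ((Int.castRingHom ℚ).mapMatrix (m := ι)).toMonoidHom
      (Matrix.map_injective Int.cast_injective) _
  obtain ⟨S, hSn, hlcm, hdeg⟩ := Matrix.exists_divisors_sum_totient_le_card hn0 hA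
  exact (Nat.sum_totient_ordProj_le_of_dvd_lcm (fun h => by simpa using hSn h) hlcm
    fun p hp => Nat.two_le_totient_ordProj hn hp).trans hdeg

theorem AdjoinRoot.orderOf_root_cyclotomic {k : ℕ} (hk : k ≠ 0) :
    orderOf (root (cyclotomic k ℤ)) = k := by
  have hζ := Complex.isPrimitiveRoot_exp k hk
  have heval : (cyclotomic k ℤ).eval₂ (Int.castRingHom ℂ)
      (Complex.exp (2 * Real.pi * Complex.I / k)) = 0 := by
    rw [eval₂_eq_eval_map, map_cyclotomic]
    exact hζ.isRoot_cyclotomic (Nat.pos_of_ne_zero hk)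
  refine Nat.dvd_antisymm (orderOf_dvd_of_pow_eq_one ?_) ?_
  · have h := (mk_eq_zero (f := cyclotomic k ℤ)).2 (cyclotomic.dvd_X_pow_sub_one k ℤ)
    simpa [sub_eq_zero] using h
  · have h := orderOf_map_dvd (lift (Int.castRingHom ℂ) _ heval).toMonoidHom (root _)
    rwa [RingHom.toMonoidHom_eq_coe, MonoidHom.coe_coe, lift_root, ← hζ.eq_orderOf] at h

theorem exists_matrix_fin_totient_orderOf_eq {k : ℕ} (hk : k ≠ 0) :
    ∃ M : Matrix (Fin (φ k)) (Fin (φ k)) ℤ, orderOf M = k := by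
  let b := (AdjoinRoot.powerBasis' (cyclotomic.monic k ℤ)).basis.reindex
    (finCongr (natDegree_cyclotomic k ℤ))
  refine ⟨Algebra.leftMulMatrix b (AdjoinRoot.root _), ?_⟩
  exact (orderOf_injective (Algebra.leftMulMatrix b).toMonoidHom
    (Algebra.leftMulMatrix_injective b) _).trans (AdjoinRoot.orderOf_root_cyclotomic hk)

theorem exists_matrix_sigma_totient_orderOf_eq_prod {ι : Type*} [Fintype ι] [DecidableEq ι]
    {q : ι → ℕ} (hq : ∀ i, q i ≠ 0) (hco : Pairwise (Nat.Coprime on q)) :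
    ∃ M : Matrix (Σ i, Fin (φ (q i))) (Σ i, Fin (φ (q i))) ℤ, orderOf M = ∏ i, q i := by
  choose M hM using fun i => exists_matrix_fin_totient_orderOf_eq (hq i)
  refine ⟨blockDiagonal' M, ?_⟩
  calc orderOf (blockDiagonal' M) = orderOf M :=
        orderOf_injective (blockDiagonal'RingHom _ ℤ).toMonoidHom blockDiagonal'_injective M
    _ = Finset.univ.lcm q := by simp only [Pi.orderOf, hM]
    _ = ∏ i, q i := Finset.lcm_eq_prod (hco.set_pairwise _)

theorem Matrix.orderOf_reindex {R m n : Type*} [Semiring R] [Fintype m] [Fintype n]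
    [DecidableEq m] [DecidableEq n] (e : m ≃ n) (M : Matrix m m R) :
    orderOf (reindex e e M) = orderOf M :=
  MulEquiv.orderOf_eq (reindexAlgEquiv ℕ R e).toMulEquiv M

theorem exists_unit_orderOf_eq {M : Type*} [Monoid M] {x : M} (hx : IsOfFinOrder x) :
    ∃ u : Mˣ, orderOf u = orderOf x :=
  ⟨hx.unit, by rw [← orderOf_units, hx.val_unit]⟩

theorem exists_GL_orderOf_eq_sum_totient {n : ℕ} (hn : n ≠ 0) :
    ∃ g : GL (Fin (∑ p ∈ n.primeFactors, φ (p ^ n.factorization p))) ℤ, orderOf g = n := by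
  obtain ⟨M, hM⟩ := exists_matrix_sigma_totient_orderOf_eq_prod (ι := n.primeFactors)
    (q := fun p => p.1 ^ n.factorization p.1)
    (fun p => pow_ne_zero _ (Nat.prime_of_mem_primeFactors p.2).ne_zero)
    (fun p q hpq => Nat.pairwise_coprime_ordProj n p.2 q.2 (Subtype.coe_ne_coe.2 hpq))
  rw [Finset.prod_coe_sort n.primeFactors (fun p => p ^ n.factorization p),
    ← Nat.prod_primeFactors_pow_factorization hn] at hM
  have hcard : Fintype.card (Σ p : n.primeFactors, Fin (φ (p.1 ^ n.factorization p.1))) =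
      ∑ p ∈ n.primeFactors, φ (p ^ n.factorization p) := by
    simp only [Fintype.card_sigma, Fintype.card_fin]
    exact Finset.sum_coe_sort n.primeFactors fun p => φ (p ^ n.factorization p)
  let e := Fintype.equivFinOfCardEq hcard
  have he : orderOf (reindex e e M) = n := (Matrix.orderOf_reindex e M).trans hM
  obtain ⟨g, hg⟩ := exists_unit_orderOf_eq (orderOf_pos_iff.1 (he ▸ Nat.pos_of_ne_zero hn))
  exact ⟨g, hg.trans he⟩

theorem orderOf_neg_of_odd {G : Type*} [Monoid G] [HasDistribNeg G] (h : (-1 : G) ≠ 1) {x : G}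
    (hx : Odd (orderOf x)) : orderOf (-x) = 2 * orderOf x := by
  have h2 : orderOf (-1 : G) = 2 := orderOf_eq_prime (by simp) h
  rw [← neg_one_mul, (Commute.neg_one_left x).orderOf_mul_eq_mul_orderOf_of_coprime
    (by rw [h2]; exact Nat.coprime_two_left.2 hx), h2]

theorem Matrix.GeneralLinearGroup.neg_one_ne_one {ι R : Type*} [Fintype ι] [DecidableEq ι]
    [CommRing R] [Nonempty ι] (h : (-1 : R) ≠ 1) : (-1 : GL ι R) ≠ 1 := by
  obtain ⟨i⟩ := ‹Nonempty ι›
  intro h1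
  exact h (by simpa using congrArg (fun g : GL ι R => (g : Matrix ι ι R) i i) h1)

theorem Matrix.GeneralLinearGroup.nonempty_of_orderOf_ne_one {ι R : Type*} [Fintype ι]
    [DecidableEq ι] [CommRing R] {g : GL ι R} (hg : orderOf g ≠ 1) : Nonempty ι := by
  by_contra h
  rw [not_nonempty_iff] at h
  exact hg (orderOf_eq_one_iff.2 (Subsingleton.elim _ _))

theorem exists_GL_orderOf_two_mul_iff {ι : Type*} [Fintype ι] [DecidableEq ι] {m : ℕ}
    (hm : Odd m) (hm1 : m ≠ 1) :
    (∃ g : GL ι ℤ, orderOf g = 2 * m) ↔ ∃ g : GL ι ℤ, orderOf g = m := by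
  constructor
  · rintro ⟨g, hg⟩
    refine ⟨g ^ 2, ?_⟩
    rw [orderOf_pow_of_dvd two_ne_zero (hg ▸ dvd_mul_right 2 m), hg,
      Nat.mul_div_cancel_left m two_pos]
  · rintro ⟨g, hg⟩
    have := GeneralLinearGroup.nonempty_of_orderOf_ne_one (hg.trans_ne hm1)
    exact ⟨-g, hg ▸ orderOf_neg_of_odd (GeneralLinearGroup.neg_one_ne_one (by decide))
      (hg ▸ hm)⟩

theorem minOrderRank_eq_of_forall_le {n N : ℕ} (hN : ∃ g : GL (Fin N) ℤ, orderOf g = n)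
    (hle : ∀ D, ∀ g : GL (Fin D) ℤ, orderOf g = n → N ≤ D) : minOrderRank n = N :=
  le_antisymm (Nat.sInf_le hN) (le_csInf ⟨N, hN⟩ fun D ⟨g, hg⟩ => hle D g hg)

/-- With `D(n)` the minimal `D` such that `GL(D,ℤ)` has an element of
order `n` (so `D(1) = 0`): `D(2) = 1`; for even `n > 2` with `n/2` odd, `D(n) = D(n/2)`;
and if `n` is odd or divisible by `4`, then for the prime factorization
`n = p₁^{m₁}⋯p_s^{m_s}` one has `D(n) = Σ_i φ(p_i^{m_i})`. -/
theorem stmt19 :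
    minOrderRank 1 = 0 ∧
    minOrderRank 2 = 1 ∧
    (∀ n : ℕ, 2 < n → Even n → Odd (n / 2) → minOrderRank n = minOrderRank (n / 2)) ∧
    (∀ n : ℕ, 0 < n → (Odd n ∨ 4 ∣ n) →
      minOrderRank n = ∑ p ∈ n.primeFactors, Nat.totient (p ^ (n.factorization p))) := by
  refine ⟨minOrderRank_eq_of_forall_le ⟨1, orderOf_one⟩ fun _ _ _ => Nat.zero_le _,
    minOrderRank_eq_of_forall_le ⟨-1, ?_⟩ fun D g hg => ?_, fun n hn he ho => ?_,
    fun n hn hpar => minOrderRank_eq_of_forall_le (exists_GL_orderOf_eq_sum_totient hn.ne')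
      fun D g hg => by simpa using sum_totient_ordProj_le_card_of_orderOf_eq hpar g hg⟩
  · exact orderOf_eq_prime (by simp) (GeneralLinearGroup.neg_one_ne_one (by decide))
  · exact Fin.pos_iff_nonempty.2
      (GeneralLinearGroup.nonempty_of_orderOf_ne_one (hg.trans_ne (by decide)))
  · obtain ⟨m, rfl⟩ := he
    rw [← two_mul] at hn ho ⊢
    rw [Nat.mul_div_cancel_left m two_pos] at ho ⊢
    unfold minOrderRank
    congr 1
    ext D
    exact exists_GL_orderOf_two_mul_iff ho (by omega)
end
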